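/- (Rankine–Hugoniot partner: existence, uniqueness and entropy condition.) For every supersonic state u₋ ∈ (c_*, u_max) there exists a unique subsonic state u₊ ∈ (0, c_*) satisfying the Rankine–Hugoniot condition ρ(u₊)·u₊ = ρ(u₋)·u₋. Moreover the Bernoulli relation (1/2)u₋² + c(u₋)²/(γ−1) = (1/2)u₊² + c(u₊)²/(γ−1) holds automatically, u₊ < u₋, and the physical entropy condition p(u₋) < p(u₊) holds, i.e. ρ(u₋)^γ < ρ(u₊)^γ. -/

import Mathlib

open Real Set Filter Topology

/-- Maximal speed `u_max = √(2c₀²/(γ−1))`. -/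
noncomputable def uMax (γ c₀ : ℝ) : ℝ := Real.sqrt (2 * c₀ ^ 2 / (γ - 1))

/-- Critical (sonic) speed `c_* = √(2c₀²/(γ+1))`. -/
noncomputable def cStar (γ c₀ : ℝ) : ℝ := Real.sqrt (2 * c₀ ^ 2 / (γ + 1))

/-- Local sonic speed `c(u) = √(c₀² − ((γ−1)/2)u²)`. -/
noncomputable def sonic (γ c₀ u : ℝ) : ℝ := Real.sqrt (c₀ ^ 2 - (γ - 1) / 2 * u ^ 2)

/-- Density `ρ(u) = ((c₀² − ((γ−1)/2)u²)/γ)^{1/(γ−1)}`. -/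
noncomputable def dens (γ c₀ u : ℝ) : ℝ :=
  ((c₀ ^ 2 - (γ - 1) / 2 * u ^ 2) / γ) ^ ((1 : ℝ) / (γ - 1))

/-- Mass flux `F(u) = ρ(u)·u`. -/
noncomputable def flux (γ c₀ u : ℝ) : ℝ := dens γ c₀ u * u

/-- Pressure `p(u) = ρ(u)^γ`. -/
noncomputable def pres (γ c₀ u : ℝ) : ℝ := dens γ c₀ u ^ γ

/-!
The mass flux satisfies `F' = ρ (1 - u²/c²)` and `c(u) = u` exactly at `u = c_*`, so `F` increases
on `[0, c_*]` and decreases on `[c_*, u_max]`. Since `F 0 = 0 < F u₋ < F c_*`, the intermediate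
value theorem on `[0, c_*]` gives the partner and monotonicity its uniqueness. Bernoulli's sum
`u²/2 + c²/(γ-1)` is the constant `c₀²/(γ-1)`, and `ρ`, hence `p = ρ^γ`, decreases in `u`, which
with `u₊ < c_* < u₋` gives the entropy condition.
-/

lemma lt_sqrt_two_mul_div_iff {a k u : ℝ} (hk : 0 < k) (hu : 0 ≤ u) :
    u < √(2 * a / k) ↔ 0 < a - k / 2 * u ^ 2 := by
  rw [Real.lt_sqrt hu, lt_div_iff₀ hk]
  constructor <;> intro h <;> linarith

lemma sqrt_two_mul_div_lt_iff {a k u : ℝ} (hk : 0 < k) (hu : 0 < u) :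
    √(2 * a / k) < u ↔ a - k / 2 * u ^ 2 < 0 := by
  rw [Real.sqrt_lt' hu, div_lt_iff₀ hk]
  constructor <;> intro h <;> linarith

section

variable {γ c₀ : ℝ}

lemma dens_pos {u : ℝ} (hγ : 0 < γ) (hA : 0 < c₀ ^ 2 - (γ - 1) / 2 * u ^ 2) :
    0 < dens γ c₀ u :=
  Real.rpow_pos_of_pos (div_pos hA hγ) _

lemma hasDerivAt_dens {u : ℝ} (hγ : 1 < γ) (hA : 0 < c₀ ^ 2 - (γ - 1) / 2 * u ^ 2) :
    HasDerivAt (dens γ c₀) (-(dens γ c₀ u * u / (c₀ ^ 2 - (γ - 1) / 2 * u ^ 2))) u := by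
  have hγ₀ : γ ≠ 0 := by positivity
  have hγ₁ : γ - 1 ≠ 0 := by linarith
  have hbase : (c₀ ^ 2 - (γ - 1) / 2 * u ^ 2) / γ ≠ 0 := by positivity
  have hinner : HasDerivAt (fun x : ℝ => (c₀ ^ 2 - (γ - 1) / 2 * x ^ 2) / γ)
      (-((γ - 1) / 2 * (2 * u ^ 1)) / γ) u :=
    (((hasDerivAt_pow 2 u).const_mul _).const_sub _).div_const γ
  have h : HasDerivAt (dens γ c₀) _ u :=
    hinner.rpow_const (p := 1 / (γ - 1)) (Or.inl hbase)
  convert h using 1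
  rw [Real.rpow_sub_one hbase, dens]
  field_simp

/-- `F' = ρ (1 - u²/c²)`, whose sign is that of `c² - u² = c₀² - ((γ+1)/2) u²`. -/
lemma hasDerivAt_flux {u : ℝ} (hγ : 1 < γ) (hA : 0 < c₀ ^ 2 - (γ - 1) / 2 * u ^ 2) :
    HasDerivAt (flux γ c₀)
      (dens γ c₀ u * (c₀ ^ 2 - (γ + 1) / 2 * u ^ 2) / (c₀ ^ 2 - (γ - 1) / 2 * u ^ 2)) u := by
  have h : HasDerivAt (flux γ c₀) _ u := (hasDerivAt_dens hγ hA).mul (hasDerivAt_id' u)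
  convert h using 1
  generalize hAdef : c₀ ^ 2 - (γ - 1) / 2 * u ^ 2 = A at hA ⊢
  field_simp
  linear_combination 2 * dens γ c₀ u * hAdef

lemma continuous_flux (hγ : 1 < γ) : Continuous (flux γ c₀) :=
  ((Real.continuous_rpow_const (by bound)).comp (by fun_prop)).mul continuous_id

lemma strictMonoOn_flux (hγ : 1 < γ) : StrictMonoOn (flux γ c₀) (Icc 0 (cStar γ c₀)) := by
  refine strictMonoOn_of_deriv_pos (convex_Icc _ _) (continuous_flux hγ).continuousOn ?_
  intro x hx
  rw [interior_Icc] at hx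
  have hB : 0 < c₀ ^ 2 - (γ + 1) / 2 * x ^ 2 :=
    (lt_sqrt_two_mul_div_iff (by linarith) hx.1.le).1 hx.2
  have hA : 0 < c₀ ^ 2 - (γ - 1) / 2 * x ^ 2 := by nlinarith
  rw [(hasDerivAt_flux hγ hA).deriv]
  exact div_pos (mul_pos (dens_pos (by linarith) hA) hB) hA

lemma strictAntiOn_flux (hγ : 1 < γ) :
    StrictAntiOn (flux γ c₀) (Icc (cStar γ c₀) (uMax γ c₀)) := by
  refine strictAntiOn_of_deriv_neg (convex_Icc _ _) (continuous_flux hγ).continuousOn ?_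
  intro x hx
  rw [interior_Icc] at hx
  have hx₀ : 0 < x := (Real.sqrt_nonneg _).trans_lt hx.1
  have hB : c₀ ^ 2 - (γ + 1) / 2 * x ^ 2 < 0 :=
    (sqrt_two_mul_div_lt_iff (by linarith) hx₀).1 hx.1
  have hA : 0 < c₀ ^ 2 - (γ - 1) / 2 * x ^ 2 :=
    (lt_sqrt_two_mul_div_iff (by linarith) hx₀.le).1 hx.2
  rw [(hasDerivAt_flux hγ hA).deriv]
  exact div_neg_of_neg_of_pos (mul_neg_of_pos_of_neg (dens_pos (by linarith) hA) hB) hA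

lemma strictAntiOn_dens (hγ : 1 < γ) : StrictAntiOn (dens γ c₀) (Ico 0 (uMax γ c₀)) := by
  intro u hu v hv huv
  have hA : 0 < c₀ ^ 2 - (γ - 1) / 2 * v ^ 2 :=
    (lt_sqrt_two_mul_div_iff (by linarith) hv.1).1 hv.2
  have hsq : u ^ 2 < v ^ 2 := pow_lt_pow_left₀ huv hu.1 two_ne_zero
  refine Real.rpow_lt_rpow (div_pos hA (by linarith)).le ?_ (by bound)
  gcongr

lemma strictAntiOn_pres (hγ : 1 < γ) : StrictAntiOn (pres γ c₀) (Ico 0 (uMax γ c₀)) :=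
  fun _ hu _ hv huv =>
    Real.rpow_lt_rpow (dens_pos (by linarith)
      ((lt_sqrt_two_mul_div_iff (by linarith) hv.1).1 hv.2)).le
      (strictAntiOn_dens hγ hu hv huv) (by linarith)

lemma half_sq_add_sonic_sq_div {u : ℝ} (hγ : γ ≠ 1) (hA : 0 ≤ c₀ ^ 2 - (γ - 1) / 2 * u ^ 2) :
    1 / 2 * u ^ 2 + sonic γ c₀ u ^ 2 / (γ - 1) = c₀ ^ 2 / (γ - 1) := by
  have : γ - 1 ≠ 0 := sub_ne_zero.2 hγ
  rw [sonic, Real.sq_sqrt hA]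
  field_simp
  ring

end

theorem rankine_hugoniot_partner_general (γ c₀ : ℝ) (hγ : 1 < γ) :
    ∀ um ∈ Set.Ioo (cStar γ c₀) (uMax γ c₀),
      (∃! up, up ∈ Set.Ioo 0 (cStar γ c₀) ∧ dens γ c₀ up * up = dens γ c₀ um * um) ∧
      ∀ up ∈ Set.Ioo 0 (cStar γ c₀), dens γ c₀ up * up = dens γ c₀ um * um →
        (1 / 2 * um ^ 2 + sonic γ c₀ um ^ 2 / (γ - 1) =
          1 / 2 * up ^ 2 + sonic γ c₀ up ^ 2 / (γ - 1)) ∧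
        up < um ∧
        pres γ c₀ um < pres γ c₀ up := by
  intro um hum
  have hcStar : 0 ≤ cStar γ c₀ := Real.sqrt_nonneg _
  have hum₀ : 0 < um := hcStar.trans_lt hum.1
  have hA : ∀ u, 0 ≤ u → u < uMax γ c₀ → 0 < c₀ ^ 2 - (γ - 1) / 2 * u ^ 2 :=
    fun u hu₀ hu => (lt_sqrt_two_mul_div_iff (by linarith) hu₀).1 hu
  have hflux : flux γ c₀ um ∈ Ioo (flux γ c₀ 0) (flux γ c₀ (cStar γ c₀)) := by
    refine ⟨by simpa [flux] using mul_pos (dens_pos (by linarith) (hA um hum₀.le hum.2)) hum₀, ?_⟩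
    exact strictAntiOn_flux hγ ⟨le_rfl, (hum.1.trans hum.2).le⟩ ⟨hum.1.le, hum.2.le⟩ hum.1
  obtain ⟨up, hup, hup_eq⟩ :=
    intermediate_value_Ioo hcStar (continuous_flux hγ).continuousOn hflux
  refine ⟨⟨up, ⟨hup, hup_eq⟩, fun v ⟨hv, hv_eq⟩ => ?_⟩, fun v hv _ => ?_⟩
  · exact (strictMonoOn_flux hγ).injOn (Ioo_subset_Icc_self hv) (Ioo_subset_Icc_self hup)
      (hv_eq.trans hup_eq.symm)
  · have hv_lt : v < um := hv.2.trans hum.1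
    refine ⟨?_, hv_lt, strictAntiOn_pres hγ ⟨hv.1.le, hv_lt.trans hum.2⟩ ⟨hum₀.le, hum.2⟩ hv_lt⟩
    rw [half_sq_add_sonic_sq_div hγ.ne' (hA um hum₀.le hum.2).le,
      half_sq_add_sonic_sq_div hγ.ne' (hA v hv.1.le (hv_lt.trans hum.2)).le]

/-- Rankine–Hugoniot partner: for every supersonic `u₋ ∈ (c_*, u_max)` there
is a unique subsonic `u₊ ∈ (0, c_*)` with `ρ(u₊)u₊ = ρ(u₋)u₋`; Bernoulli's relation holds,
`u₊ < u₋`, and the entropy condition `p(u₋) < p(u₊)` holds. -/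
theorem rankine_hugoniot_partner (γ c₀ : ℝ) (hγ : 1 < γ) (hc₀ : 0 < c₀) :
    ∀ um ∈ Set.Ioo (cStar γ c₀) (uMax γ c₀),
      (∃! up, up ∈ Set.Ioo 0 (cStar γ c₀) ∧ dens γ c₀ up * up = dens γ c₀ um * um) ∧
      ∀ up ∈ Set.Ioo 0 (cStar γ c₀), dens γ c₀ up * up = dens γ c₀ um * um →
        (1 / 2 * um ^ 2 + sonic γ c₀ um ^ 2 / (γ - 1) =
          1 / 2 * up ^ 2 + sonic γ c₀ up ^ 2 / (γ - 1)) ∧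
        up < um ∧
        pres γ c₀ um < pres γ c₀ up :=
  rankine_hugoniot_partner_general γ c₀ hγ
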